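/- arXiv:2111.11073 — 2 statements merged into one kernel-verified Lean document; each statement's English description precedes it below -/
import Mathlib

section
/- (Proposition 2, orientation invariance.) Let M be a real n × m matrix, N a real m × n matrix, and S an m × m diagonal matrix all of whose diagonal entries are 1 or −1 (encoding a change of orientation of some of the (k+1)-simplices, so that the reoriented coboundary is S·N and its dual is M·S). Then for every θ ∈ ℝⁿ and every α ∈ ℝ^{2m} satisfying α_j = α_{m+j} for all j < m, one has ((M·S)·V_mᵀ)⁻ · sin(V_m·(S·N)·θ + α) = (M·V_mᵀ)⁻ · sin(V_m·N·θ + α), where sin is applied entrywise. Hence the frustrated nonlinear coupling term of the simplicial Sakaguchi–Kuramoto model is independent of the orientation of the (k+1)-simplices. -/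
open Matrix

/-!
Reversing the orientation of simplex `j` (`S j j = -1`) exchanges rows `j` and `m + j` of the
lift: `V_m S = P V_m` for the permutation matrix `P` of the involution `swapOn`. Hence the
reoriented coupling matrix is `(M V_mᵀ) Pᵀ` and the reoriented phase vector is
`P (V_m N θ) + α = P (V_m N θ + α)`, as `α` is `P`-invariant; since `negPart` and `sin` act
entrywise, `Pᵀ P = 1` cancels.
-/

/-- Entrywise negative part of a real matrix: `(X⁻)_{ij} = (X_{ij} − |X_{ij}|)/2`. -/
noncomputable def negPart {m n : Type*} (X : Matrix m n ℝ) : Matrix m n ℝ :=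
  fun i j => (X i j - |X i j|) / 2

/-- The lift matrix `V_m`: the identity `I_m` stacked on top of `−I_m`. -/
def liftMat (m : ℕ) : Matrix (Fin m ⊕ Fin m) (Fin m) ℝ :=
  Matrix.fromRows 1 (-1)

def swapOn {κ : Type*} (p : κ → Prop) [DecidablePred p] : Equiv.Perm (κ ⊕ κ) :=
  Function.Involutive.toPerm
    (Sum.elim (fun j => if p j then .inr j else .inl j) (fun j => if p j then .inl j else .inr j))
    (by rintro (j | j) <;> by_cases h : p j <;> simp [h])

section swapOn

variable {κ : Type*} (p : κ → Prop) [DecidablePred p]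

@[simp]
lemma swapOn_inl (j : κ) : swapOn p (.inl j) = if p j then .inr j else .inl j := rfl

@[simp]
lemma swapOn_inr (j : κ) : swapOn p (.inr j) = if p j then .inl j else .inr j := rfl

lemma comp_swapOn_eq_self {R : Type*} {α : κ ⊕ κ → R} (hα : ∀ j, α (.inl j) = α (.inr j)) :
    α ∘ swapOn p = α := by
  funext k
  rcases k with j | j <;> by_cases h : p j <;> simp [h, hα]

end swapOn

lemma liftMat_mul_diagonal {m : ℕ} {s : Fin m → ℝ} (hs : ∀ j, s j = 1 ∨ s j = -1) :
    liftMat m * diagonal s = (liftMat m).submatrix (swapOn (fun j => s j = -1)) id := by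
  have h1 : (1 : ℝ) ≠ -1 := by norm_num
  ext (j | j) i <;> rcases hs j with h | h <;> by_cases hji : j = i <;>
    simp [liftMat, h, h1, one_apply, hji] <;> simp [← hji, h, h1]

lemma negPart_submatrix_mulVec_sin {ι κ : Type*} [Fintype κ] (Y : Matrix ι κ ℝ) (σ : Equiv.Perm κ)
    (u α : κ → ℝ) (hα : α ∘ σ = α) :
    negPart (Y.submatrix id σ) *ᵥ (fun k => Real.sin ((u ∘ σ + α) k)) =
      negPart Y *ᵥ (fun k => Real.sin ((u + α) k)) := by
  conv_lhs => rw [← hα]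
  change (negPart Y).submatrix id σ *ᵥ _ = _
  rw [submatrix_mulVec_equiv, Function.comp_id]
  congr 1
  ext k
  simp

/-- Proposition 2: the frustrated nonlinear coupling term of the simplicial
Sakaguchi–Kuramoto model is independent of the orientation of the `(k+1)`-simplices. -/
theorem frustrated_coupling_orientation_invariant (n m : ℕ)
    (M : Matrix (Fin n) (Fin m) ℝ) (N : Matrix (Fin m) (Fin n) ℝ)
    (S : Matrix (Fin m) (Fin m) ℝ)
    (hSdiag : ∀ i j, i ≠ j → S i j = 0)
    (hSsign : ∀ j, S j j = 1 ∨ S j j = -1)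
    (θ : Fin n → ℝ) (α : Fin m ⊕ Fin m → ℝ)
    (hα : ∀ j, α (Sum.inl j) = α (Sum.inr j)) :
    negPart ((M * S) * (liftMat m)ᵀ) *ᵥ
        (fun i => Real.sin ((liftMat m *ᵥ ((S * N) *ᵥ θ) + α) i)) =
      negPart (M * (liftMat m)ᵀ) *ᵥ
        (fun i => Real.sin ((liftMat m *ᵥ (N *ᵥ θ) + α) i)) := by
  obtain ⟨s, rfl⟩ : ∃ s, diagonal s = S := ⟨S.diag, (isDiag_iff_diagonal_diag S).1 hSdiag⟩
  set σ := swapOn (fun j => s j = -1)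
  have hV : liftMat m * diagonal s = (liftMat m).submatrix σ id :=
    liftMat_mul_diagonal fun j => by simpa using hSsign j
  have hcoupling : M * diagonal s * (liftMat m)ᵀ = (M * (liftMat m)ᵀ).submatrix id σ := by
    rw [← diagonal_transpose s, Matrix.mul_assoc, ← transpose_mul, hV, transpose_submatrix]
    rfl
  have hphase : liftMat m *ᵥ ((diagonal s * N) *ᵥ θ) = (liftMat m *ᵥ (N *ᵥ θ)) ∘ σ := by
    rw [← mulVec_mulVec, mulVec_mulVec, hV]
    rfl
  rw [hcoupling, hphase]
  exact negPart_submatrix_mulVec_sin _ σ _ α (comp_swapOn_eq_self _ hα)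
end

section
/- For every real n × m matrix M and every vector y ∈ ℝ^m, one has (M · V_mᵀ)⁻ · sin(V_m · y) = M · sin(y), where sin is applied entrywise. In particular, with zero nonlinear frustration the lifted-and-projected coupling term of the simplicial Sakaguchi–Kuramoto model reduces to the coupling term N_k* sin(N_k θ) of the unfrustrated simplicial Kuramoto model. -/
open Matrix

/-- With zero nonlinear frustration, the lifted-and-projected coupling term reduces to the
coupling term of the unfrustrated simplicial Kuramoto model. -/
theorem lifted_coupling_zero_frustration (n m : ℕ)
    (M : Matrix (Fin n) (Fin m) ℝ) (y : Fin m → ℝ) :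
    negPart (M * (liftMat m)ᵀ) *ᵥ (fun i => Real.sin ((liftMat m *ᵥ y) i)) =
      M *ᵥ (fun j => Real.sin (y j)) := by
  funext i
  unfold _root_.negPart liftMat
  simp only [mulVec, dotProduct, Fintype.sum_sum_type, Matrix.mul_apply,
    transpose_apply, fromRows_apply_inl, fromRows_apply_inr, Matrix.one_apply,
    Matrix.neg_apply, Real.sin_neg]
  rw [← Finset.sum_add_distrib]
  congr 1; funext j
  simp [mul_ite, Finset.sum_ite_eq', Matrix.one_apply, ite_mul, Finset.mul_sum]
  ring
end
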